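/- arXiv:2209.04985 — 3 statements merged into one kernel-verified Lean document; each statement's English description precedes it below -/
import Mathlib

section
/- Let M ∈ ℝ^{n×m}, b ∈ ℝ^n, and S ⊆ {1,...,m} with |S| = n be such that the submatrix M_S is invertible and ‖M_{S^c}^T M_S^{-T} sgn(M_S^{-1} b)‖_∞ ≤ 1. Then the vector a^{(S)} ∈ ℝ^m defined by a^{(S)}_S = M_S^{-1} b and a^{(S)}_i = 0 for i ∉ S satisfies ‖a^{(S)}‖₁ ≤ ‖a‖₁ for every a ∈ ℝ^m with Ma = b; in other words, a^{(S)} is a minimizer of ‖a‖₁ subject to Ma = b. -/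
/-!
Weak duality for `min ‖a‖₁ subject to M a = b`: if `y` satisfies `‖Mᵀ y‖_∞ ≤ 1`, then every
feasible `a` has `y ⬝ b = (Mᵀ y) ⬝ a ≤ ‖a‖₁`. For `c = M_S⁻¹ b` the vector `y = M_S⁻ᵀ sgn c` is
such a certificate: on `S` the entries of `Mᵀ y` are `sgn c`, off `S` they are bounded by
hypothesis, and `y ⬝ b = sgn c ⬝ c = ‖c‖₁ = ‖a⁽ˢ⁾‖₁`.
-/

open Matrix

/-- The vector of `ℝ^m` supported on the image of `σ : Fin n → Fin m`
whose entry at `σ l` equals `c l`. -/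
def sparseExt {n m : ℕ} (σ : Fin n → Fin m) (c : Fin n → ℝ) : Fin m → ℝ :=
  fun i => ∑ l, if i = σ l then c l else 0

namespace Real

lemma sign_mul_self_eq_abs (x : ℝ) : sign x * x = |x| := by
  rcases lt_trichotomy x 0 with h | rfl | h
  · rw [sign_of_neg h, abs_of_neg h]; ring
  · simp
  · rw [sign_of_pos h, abs_of_pos h]; ring

lemma abs_sign_le_one (x : ℝ) : |sign x| ≤ 1 := by
  rcases sign_apply_eq x with h | h | h <;> simp [h]

lemma sign_dotProduct_self {ι : Type*} [Fintype ι] (c : ι → ℝ) :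
    (fun l => sign (c l)) ⬝ᵥ c = ∑ l, |c l| :=
  Finset.sum_congr rfl fun l _ => sign_mul_self_eq_abs (c l)

end Real

lemma dotProduct_le_sum_abs_of_abs_le_one {ι : Type*} [Fintype ι] {y a : ι → ℝ}
    (hy : ∀ i, |y i| ≤ 1) : y ⬝ᵥ a ≤ ∑ i, |a i| := by
  refine Finset.sum_le_sum fun i _ => ?_
  calc y i * a i ≤ |y i| * |a i| := by rw [← abs_mul]; exact le_abs_self _
    _ ≤ |a i| := mul_le_of_le_one_left (abs_nonneg _) (hy i)

lemma dotProduct_le_sum_abs_of_mulVec_eq {m n : Type*} [Fintype m] [Fintype n]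
    {M : Matrix n m ℝ} {a : m → ℝ} {b y : n → ℝ} (hy : ∀ i, |(Mᵀ *ᵥ y) i| ≤ 1)
    (ha : M *ᵥ a = b) : y ⬝ᵥ b ≤ ∑ i, |a i| := by
  rw [← ha, dotProduct_mulVec, ← mulVec_transpose]
  exact dotProduct_le_sum_abs_of_abs_le_one hy

lemma sparseExt_apply_self {n m : ℕ} {σ : Fin n → Fin m} (hσ : Function.Injective σ)
    (c : Fin n → ℝ) (l : Fin n) : sparseExt σ c (σ l) = c l := by
  simp [sparseExt, hσ.eq_iff]

lemma sparseExt_apply_of_notMem_range {n m : ℕ} {σ : Fin n → Fin m} (c : Fin n → ℝ)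
    {i : Fin m} (hi : i ∉ Set.range σ) : sparseExt σ c i = 0 :=
  Finset.sum_eq_zero fun l _ => if_neg fun h => hi ⟨l, h.symm⟩

lemma sum_abs_sparseExt {n m : ℕ} {σ : Fin n → Fin m} (hσ : Function.Injective σ)
    (c : Fin n → ℝ) : ∑ i, |sparseExt σ c i| = ∑ l, |c l| := by
  classical
  rw [← Finset.sum_subset (Finset.subset_univ (Finset.univ.image σ)), Finset.sum_image hσ.injOn]
  · simp only [sparseExt_apply_self hσ]
  · intro i _ hi
    rw [sparseExt_apply_of_notMem_range c, abs_zero]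
    rintro ⟨l, rfl⟩
    exact hi (Finset.mem_image_of_mem σ (Finset.mem_univ l))

lemma transpose_mulVec_apply_of_submatrix {n m : ℕ} {M : Matrix (Fin n) (Fin m) ℝ}
    {σ : Fin n → Fin m} {MS : Matrix (Fin n) (Fin n) ℝ} (hMS : ∀ j l, MS j l = M j (σ l))
    (y : Fin n → ℝ) (l : Fin n) : (Mᵀ *ᵥ y) (σ l) = (MSᵀ *ᵥ y) l := by
  simp [mulVec, dotProduct, hMS]

lemma transpose_mulVec_nonsing_inv_transpose_mulVec {n : Type*} [Fintype n] [DecidableEq n]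
    {A : Matrix n n ℝ} (hA : IsUnit A.det) (s : n → ℝ) : Aᵀ *ᵥ (A⁻¹ᵀ *ᵥ s) = s := by
  rw [mulVec_mulVec, transpose_nonsing_inv, mul_nonsing_inv _ (isUnit_det_transpose A hA),
    one_mulVec]

/-- if the submatrix `M_S` (columns of `M` selected by the injection `σ`)
is invertible and `‖M_{Sᶜ}ᵀ M_S⁻ᵀ sgn(M_S⁻¹ b)‖_∞ ≤ 1`, then the vector `a⁽ˢ⁾`
supported on `S` with `a⁽ˢ⁾_S = M_S⁻¹ b` is an `ℓ¹`-minimizer subject to `Ma = b`. -/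
theorem sparse_l1_minimizer_of_dual_certificate
    (n m : ℕ) (M : Matrix (Fin n) (Fin m) ℝ) (b : Fin n → ℝ)
    (σ : Fin n → Fin m) (hσ : Function.Injective σ)
    (MS : Matrix (Fin n) (Fin n) ℝ) (hMS : ∀ j l, MS j l = M j (σ l))
    (hMS_inv : IsUnit MS.det)
    (hcert : ∀ i : Fin m, i ∉ Set.range σ →
      |∑ j, M j i * ((MS⁻¹)ᵀ.mulVec fun l => Real.sign (MS⁻¹.mulVec b l)) j| ≤ 1) :
    ∀ a : Fin m → ℝ, M.mulVec a = b →
      ∑ i, |sparseExt σ (MS⁻¹.mulVec b) i| ≤ ∑ i, |a i| := by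
  intro a ha
  set c := MS⁻¹ *ᵥ b
  set y := MS⁻¹ᵀ *ᵥ fun l => Real.sign (c l)
  have hy : ∀ i, |(Mᵀ *ᵥ y) i| ≤ 1 := by
    intro i
    by_cases hi : i ∈ Set.range σ
    · obtain ⟨l, rfl⟩ := hi
      rw [transpose_mulVec_apply_of_submatrix hMS,
        transpose_mulVec_nonsing_inv_transpose_mulVec hMS_inv]
      exact Real.abs_sign_le_one _
    · exact hcert i hi
  calc ∑ i, |sparseExt σ c i| = (fun l => Real.sign (c l)) ⬝ᵥ c := by
        rw [sum_abs_sparseExt hσ, Real.sign_dotProduct_self]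
    _ = y ⬝ᵥ b := by rw [dotProduct_mulVec, ← mulVec_transpose]
    _ ≤ ∑ i, |a i| := dotProduct_le_sum_abs_of_mulVec_eq hy ha
end

section
/- Let V be an n-dimensional Chebyshev subspace of C([-1,1]) with n ≥ 2, let ξ^1 < ξ^2 < ... < ξ^n be points of [-1,1], and for each i let L_i be the unique element of V with L_i(ξ^j) = δ_{i,j} for all j. Then for every i ∈ {1,...,n−1} and every x with ξ^i < x < ξ^{i+1}, one has L_i(x) > 0 and L_{i+1}(x) > 0. -/
/-!
A nonzero element of an `n`-dimensional Chebyshev space vanishes at no more than `n - 1`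
points. Since `Lₖ` already vanishes at the `n - 1` nodes `ξᵐ`, `m ≠ k`, it has no further zero.
Hence `Lᵢ` and `Lᵢ₊₁` do not vanish on `(ξⁱ, ξⁱ⁺¹)`, which contains no node, and by the
intermediate value theorem they keep there the sign of their value `1` at the endpoint node.
-/

open Set

def IsChebyshev {X : Type*} [TopologicalSpace X] (n : ℕ) (V : Submodule ℝ C(X, ℝ)) : Prop :=
  Module.finrank ℝ V = n ∧
    ∀ ξ : Fin n → X, Function.Injective ξ → ∀ γ : Fin n → ℝ,
      ∃! v : C(X, ℝ), v ∈ V ∧ ∀ i, v (ξ i) = γ i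

theorem Function.Injective.update_of_notMem_range {α β : Type*} [DecidableEq α] {f : α → β}
    (hf : Function.Injective f) (a : α) {b : β} (hb : b ∉ range f) :
    Function.Injective (Function.update f a b) := by
  intro x y hxy
  simp only [Function.update_apply] at hxy
  split_ifs at hxy with hx hy hy
  · rw [hx, hy]
  · exact absurd ⟨y, hxy.symm⟩ hb
  · exact absurd ⟨x, hxy⟩ hb
  · exact hf hxy

theorem StrictMono.notMem_range_of_lt_of_lt {α : Type*} [Preorder α] {n : ℕ} {ξ : Fin n → α}
    (hξ : StrictMono ξ) {i j : Fin n} (hij : (i : ℕ) + 1 = j) {y : α}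
    (hiy : ξ i < y) (hyj : y < ξ j) : y ∉ range ξ := by
  rintro ⟨m, rfl⟩
  have him : i < m := hξ.lt_iff_lt.1 hiy
  have hmj : m < j := hξ.lt_iff_lt.1 hyj
  omega

section Chebyshev

variable {X : Type*} [TopologicalSpace X] {n : ℕ} {V : Submodule ℝ C(X, ℝ)}

theorem IsChebyshev.eq_zero_of_forall_apply_eq_zero (hV : IsChebyshev n V) {ξ : Fin n → X}
    (hξ : Function.Injective ξ) {v : C(X, ℝ)} (hv : v ∈ V) (hvξ : ∀ i, v (ξ i) = 0) :
    v = 0 := by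
  obtain ⟨w, -, huniq⟩ := hV.2 ξ hξ 0
  exact (huniq v ⟨hv, hvξ⟩).trans (huniq 0 ⟨V.zero_mem, fun _ => rfl⟩).symm

/-- Moving the node `ξ k` to a zero `y` of `v` would give `n` distinct zeros. -/
theorem IsChebyshev.apply_ne_zero_of_apply_eq_zero_of_ne (hV : IsChebyshev n V)
    {ξ : Fin n → X} (hξ : Function.Injective ξ) {v : C(X, ℝ)} (hv : v ∈ V) {k : Fin n}
    (hk : v (ξ k) ≠ 0) (hvξ : ∀ m, m ≠ k → v (ξ m) = 0) {y : X} (hy : y ∉ range ξ) :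
    v y ≠ 0 := by
  classical
  intro hvy
  refine hk ?_
  have hv0 : v = 0 := by
    refine hV.eq_zero_of_forall_apply_eq_zero (hξ.update_of_notMem_range k hy) hv fun m => ?_
    by_cases hm : m = k
    · simp [hm, hvy]
    · simp [hm, hvξ m hm]
  simp [hv0]

end Chebyshev

section IntermediateValue

variable {X : Type*} [TopologicalSpace X]

theorem IsPreconnected.pos_of_forall_ne_zero {s : Set X} (hs : IsPreconnected s) {f : X → ℝ}
    (hf : ContinuousOn f s) {a : X} (ha : a ∈ s) (hfa : 0 < f a) (hne : ∀ y ∈ s, f y ≠ 0)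
    {y : X} (hy : y ∈ s) : 0 < f y := by
  by_contra! hfy
  obtain ⟨z, hz, hfz⟩ := hs.intermediate_value hy ha hf ⟨hfy, hfa.le⟩
  exact hne z hz hfz

variable [ConditionallyCompleteLinearOrder X] [DenselyOrdered X] [OrderTopology X]
  {f : X → ℝ} {a b : X}

theorem ContinuousOn.pos_on_Ioo_of_left_pos (hf : ContinuousOn f (Ico a b)) (hfa : 0 < f a)
    (hne : ∀ y ∈ Ioo a b, f y ≠ 0) {y : X} (hy : y ∈ Ioo a b) : 0 < f y := by
  refine isPreconnected_Ico.pos_of_forall_ne_zero hf (left_mem_Ico.2 (hy.1.trans hy.2)) hfa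
    (fun z hz => ?_) (Ioo_subset_Ico_self hy)
  rcases hz.1.eq_or_lt with rfl | haz
  · exact hfa.ne'
  · exact hne z ⟨haz, hz.2⟩

theorem ContinuousOn.pos_on_Ioo_of_right_pos (hf : ContinuousOn f (Ioc a b)) (hfb : 0 < f b)
    (hne : ∀ y ∈ Ioo a b, f y ≠ 0) {y : X} (hy : y ∈ Ioo a b) : 0 < f y := by
  refine isPreconnected_Ioc.pos_of_forall_ne_zero hf (right_mem_Ioc.2 (hy.1.trans hy.2)) hfb
    (fun z hz => ?_) (Ioo_subset_Ioc_self hy)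
  rcases hz.2.eq_or_lt with rfl | hzb
  · exact hfb.ne'
  · exact hne z ⟨hz.1, hzb⟩

end IntermediateValue

theorem lagrange_interpolators_positive_between_consecutive_nodes_general
    (n : ℕ)
    (V : Submodule ℝ C(Set.Icc (-1 : ℝ) 1, ℝ))
    (hCheb : IsChebyshev n V)
    (ξ : Fin n → Set.Icc (-1 : ℝ) 1) (hξ : StrictMono ξ)
    (L : Fin n → C(Set.Icc (-1 : ℝ) 1, ℝ))
    (hL_mem : ∀ i, L i ∈ V)
    (hL_interp : ∀ i j, L i (ξ j) = if i = j then 1 else 0) :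
    ∀ i j : Fin n, (i : ℕ) + 1 = (j : ℕ) →
      ∀ x : Set.Icc (-1 : ℝ) 1, ξ i < x → x < ξ j →
        0 < L i x ∧ 0 < L j x := by
  intro i j hij x hix hxj
  -- makes `Icc (-1) 1` a complete linear order, as the intermediate value lemmas need
  have : Fact ((-1 : ℝ) ≤ 1) := ⟨by norm_num⟩
  have hL_node : ∀ k, 0 < L k (ξ k) := fun k => by simp [hL_interp]
  have hL_ne : ∀ k, ∀ y ∈ Ioo (ξ i) (ξ j), L k y ≠ 0 := fun k y hy =>
    hCheb.apply_ne_zero_of_apply_eq_zero_of_ne hξ.injective (hL_mem k) (hL_node k).ne'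
      (fun m hm => by simp [hL_interp, Ne.symm hm])
      (hξ.notMem_range_of_lt_of_lt hij hy.1 hy.2)
  exact ⟨(L i).continuous.continuousOn.pos_on_Ioo_of_left_pos (hL_node i) (hL_ne i) ⟨hix, hxj⟩,
    (L j).continuous.continuousOn.pos_on_Ioo_of_right_pos (hL_node j) (hL_ne j) ⟨hix, hxj⟩⟩

/-- for a Chebyshev space of dimension `n ≥ 2` and ordered points
`ξ¹ < ⋯ < ξⁿ`, the fundamental Lagrange interpolators satisfy `Lᵢ(x) > 0` and
`Lᵢ₊₁(x) > 0` whenever `ξⁱ < x < ξⁱ⁺¹`. -/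
theorem lagrange_interpolators_positive_between_consecutive_nodes
    (n : ℕ) (hn : 2 ≤ n)
    (V : Submodule ℝ C(Set.Icc (-1 : ℝ) 1, ℝ))
    (hCheb : IsChebyshev n V)
    (ξ : Fin n → Set.Icc (-1 : ℝ) 1) (hξ : StrictMono ξ)
    (L : Fin n → C(Set.Icc (-1 : ℝ) 1, ℝ))
    (hL_mem : ∀ i, L i ∈ V)
    (hL_interp : ∀ i j, L i (ξ j) = if i = j then 1 else 0) :
    ∀ i j : Fin n, (i : ℕ) + 1 = (j : ℕ) →
      ∀ x : Set.Icc (-1 : ℝ) 1, ξ i < x → x < ξ j →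
        0 < L i x ∧ 0 < L j x :=
  lagrange_interpolators_positive_between_consecutive_nodes_general n V hCheb ξ hξ L hL_mem
    hL_interp
end

section
/- (Mairhuber–Curtis theorem) Let d ≥ 2 and let X ⊆ ℝ^d be a compact set containing an interior point. Then C(X) contains no Chebyshev subspace of dimension n ≥ 2: for every subspace V of C(X) with dim V = n ≥ 2, there exist distinct points ξ^1,...,ξ^n ∈ X and values γ ∈ ℝ^n for which the interpolation problem v ∈ V, v(ξ^i) = γ_i for all i, fails to have a unique solution. -/
/-!
If interpolation from `V` at `n` distinct points were always uniquely solvable, the collocation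
determinant `det (b j (ξ i))` would vanish at no configuration of distinct points. But a set with
an interior point in `ℝ^d`, `d ≥ 2`, contains an embedded copy of the plane, in which two points
can trade places along a path of configurations of distinct points. The determinant at the end
of that path is the one at the start with two rows exchanged, so it changes sign, and by the
intermediate value theorem it vanishes somewhere; a nonzero element of `V` then vanishes at all
`n` points, as does `0`.
-/

open Function Module
open scoped Real

structure SwapPath (X ι : Type*) [TopologicalSpace X] [DecidableEq ι] where
  toFun : ℝ → ι → X
  continuous_toFun : Continuous toFun
  injective : ∀ t, Injective (toFun t)
  i : ι
  j : ι
  ne : i ≠ j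
  toFun_one : toFun 1 = toFun 0 ∘ Equiv.swap i j

namespace SwapPath

variable {X Y ι : Type*} [TopologicalSpace X] [TopologicalSpace Y] [DecidableEq ι]

def map (γ : SwapPath X ι) (f : X → Y) (hf : Continuous f) (hf_inj : Injective f) :
    SwapPath Y ι where
  toFun t := f ∘ γ.toFun t
  continuous_toFun := continuous_pi fun k =>
    hf.comp ((continuous_apply k).comp γ.continuous_toFun)
  injective t := hf_inj.comp (γ.injective t)
  i := γ.i
  j := γ.j
  ne := γ.ne
  toFun_one := by rw [γ.toFun_one]; rfl

end SwapPath

section Collocation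

variable {X ι : Type*} [TopologicalSpace X] [Fintype ι] [DecidableEq ι]
  {V : Submodule ℝ C(X, ℝ)}

noncomputable def collocationMatrix (b : Basis ι ℝ V) (ξ : ι → X) : Matrix ι ι ℝ :=
  Matrix.of fun i j => (b j : C(X, ℝ)) (ξ i)

theorem det_collocationMatrix_comp_swap (b : Basis ι ℝ V) (ξ : ι → X) {i j : ι} (hij : i ≠ j) :
    (collocationMatrix b (ξ ∘ Equiv.swap i j)).det = -(collocationMatrix b ξ).det := by
  have : collocationMatrix b (ξ ∘ Equiv.swap i j) =
      (collocationMatrix b ξ).submatrix (Equiv.swap i j) id := rfl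
  rw [this, Matrix.det_permute, Equiv.Perm.sign_swap hij, Units.val_neg, Units.val_one,
    Int.cast_neg, Int.cast_one, neg_one_mul]

theorem continuous_det_collocationMatrix {T : Type*} [TopologicalSpace T] (b : Basis ι ℝ V)
    {p : T → ι → X} (hp : Continuous p) : Continuous fun t => (collocationMatrix b (p t)).det :=
  Continuous.matrix_det <| continuous_matrix fun i j =>
    (b j : C(X, ℝ)).continuous.comp ((continuous_apply i).comp hp)

theorem exists_mem_ne_zero_of_det_collocationMatrix_eq_zero (b : Basis ι ℝ V) {ξ : ι → X}
    (h : (collocationMatrix b ξ).det = 0) : ∃ v ∈ V, v ≠ 0 ∧ ∀ i, v (ξ i) = 0 := by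
  obtain ⟨c, hc, hMc⟩ := Matrix.exists_mulVec_eq_zero_iff.mpr h
  refine ⟨b.equivFun.symm c, (b.equivFun.symm c).2, ?_, fun i => ?_⟩
  · rw [ne_eq, ZeroMemClass.coe_eq_zero, LinearEquiv.map_eq_zero_iff]
    exact hc
  · rw [← Pi.zero_apply (M := fun _ => ℝ) i, ← hMc]
    simp [Basis.equivFun_symm_apply, Matrix.mulVec, dotProduct, collocationMatrix, mul_comm]

theorem SwapPath.exists_det_collocationMatrix_eq_zero (γ : SwapPath X ι) (b : Basis ι ℝ V) :
    ∃ t, (collocationMatrix b (γ.toFun t)).det = 0 := by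
  have h0 : (0 : ℝ) ∈ Set.uIcc (collocationMatrix b (γ.toFun 0)).det
      (collocationMatrix b (γ.toFun 1)).det := by
    rw [γ.toFun_one, det_collocationMatrix_comp_swap b _ γ.ne, Set.mem_uIcc]
    rcases le_total 0 (collocationMatrix b (γ.toFun 0)).det with h | h
    · exact Or.inr ⟨neg_nonpos.mpr h, h⟩
    · exact Or.inl ⟨h, neg_nonneg.mpr h⟩
  obtain ⟨t, -, ht⟩ := intermediate_value_uIcc
    (continuous_det_collocationMatrix b γ.continuous_toFun).continuousOn h0
  exact ⟨t, ht⟩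

end Collocation

section Embedding

variable {E : Type*} [NormedAddCommGroup E] [NormedSpace ℝ E]

theorem exists_continuous_injective_complex_of_two_le_finrank [FiniteDimensional ℝ E]
    (hE : 2 ≤ finrank ℝ E) : ∃ f : ℂ → E, Continuous f ∧ Injective f := by
  let b := finBasis ℝ E
  let u := b ⟨0, by omega⟩
  let v := b ⟨1, by omega⟩
  have huv : LinearIndependent ℝ ![u, v] := by
    convert b.linearIndependent.comp ![⟨0, by omega⟩, ⟨1, by omega⟩] ?_
    · ext k; fin_cases k <;> rfl
    · intro k l; fin_cases k <;> fin_cases l <;> simp [Fin.ext_iff]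
  refine ⟨fun z => z.re • u + z.im • v, by fun_prop, fun z w hzw => ?_⟩
  have h := LinearIndependent.pair_iff.mp huv (z.re - w.re) (z.im - w.im)
    (by linear_combination (norm := module) hzw)
  exact Complex.ext (sub_eq_zero.mp h.1) (sub_eq_zero.mp h.2)

theorem exists_continuous_injective_of_interior_nonempty {X : Set E}
    (hX : (interior X).Nonempty) : ∃ f : E → X, Continuous f ∧ Injective f := by
  obtain ⟨c, hc⟩ := hX
  obtain ⟨r, hr, hball⟩ := Metric.isOpen_iff.mp isOpen_interior c hc
  let g := OpenPartialHomeomorph.univBall c r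
  have hgX (x : E) : g x ∈ X := by
    refine interior_subset (hball ?_)
    rw [← OpenPartialHomeomorph.univBall_target c hr]
    exact g.map_source (by simp [g])
  have hg_cont : Continuous g := continuousOn_univ.mp (by simpa [g] using g.continuousOn)
  have hg_inj : Injective g := Set.injOn_univ.mp (by simpa [g] using g.injOn)
  exact ⟨fun x => ⟨g x, hgX x⟩, hg_cont.subtype_mk _, fun x y h => hg_inj congr(($h : E))⟩

end Embedding

open Complex in
/-- Points `0` and `1` turn half a circle around `1 / 2`, trading places; the others stay at `k ≥ 2`. -/
noncomputable def SwapPath.complex {n : ℕ} (hn : 2 ≤ n) : SwapPath ℂ (Fin n) where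
  toFun t k :=
    if (k : ℕ) < 2 then 1 / 2 + (((k : ℕ) : ℂ) - 1 / 2) * exp (↑(π * t) * I) else ((k : ℕ) : ℂ)
  continuous_toFun := by
    refine continuous_pi fun k => ?_
    split_ifs <;> fun_prop
  injective t a b hab := by
    have re_lt {k l : Fin n} (hk : (k : ℕ) < 2) (hl : ¬ (l : ℕ) < 2) :
        (1 / 2 + (((k : ℕ) : ℂ) - 1 / 2) * exp (↑(π * t) * I)).re < (((l : ℕ) : ℂ)).re := by
      have hk' : ((k : ℕ) : ℝ) ≤ 1 := by exact_mod_cast Nat.lt_succ_iff.mp hk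
      have hl' : (2 : ℝ) ≤ (l : ℕ) := by exact_mod_cast not_lt.mp hl
      simp only [add_re, mul_re, sub_re, sub_im, exp_ofReal_mul_I_re, exp_ofReal_mul_I_im,
        natCast_re, natCast_im, div_ofNat_re, div_ofNat_im, one_re, one_im]
      nlinarith [Real.cos_le_one (π * t), Real.neg_one_le_cos (π * t),
        (Nat.cast_nonneg (k : ℕ) : (0 : ℝ) ≤ _)]
    dsimp only at hab
    split_ifs at hab with ha hb hb
    · have := mul_right_cancel₀ (Complex.exp_ne_zero _) (add_left_cancel hab)
      exact Fin.ext (by exact_mod_cast sub_left_inj.mp this)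
    · exact absurd (congrArg re hab) (re_lt ha hb).ne
    · exact absurd (congrArg re hab) (re_lt hb ha).ne'
    · exact Fin.ext (by exact_mod_cast hab)
  i := ⟨0, by omega⟩
  j := ⟨1, by omega⟩
  ne := by simp [Fin.ext_iff]
  toFun_one := by
    funext k
    simp only [comp_apply, mul_one, mul_zero, ofReal_zero, zero_mul, Complex.exp_zero,
      exp_pi_mul_I]
    by_cases h0 : (k : ℕ) = 0
    · rw [show k = ⟨0, by omega⟩ from Fin.ext h0, Equiv.swap_apply_left]
      norm_num
    by_cases h1 : (k : ℕ) = 1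
    · rw [show k = ⟨1, by omega⟩ from Fin.ext h1, Equiv.swap_apply_right]
      norm_num
    · rw [Equiv.swap_apply_of_ne_of_ne (by simp [Fin.ext_iff, h0]) (by simp [Fin.ext_iff, h1])]
      simp [show ¬ (k : ℕ) < 2 by omega]

theorem mairhuber_curtis_general
    (d : ℕ) (hd : 2 ≤ d)
    (X : Set (EuclideanSpace ℝ (Fin d)))
    (hXint : (interior X).Nonempty)
    (n : ℕ) (hn : 2 ≤ n)
    (V : Submodule ℝ C(X, ℝ)) (hdim : Module.finrank ℝ V = n) :
    ∃ ξ : Fin n → X, Function.Injective ξ ∧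
      ∃ γ : Fin n → ℝ,
        ¬ ∃! v : C(X, ℝ), v ∈ V ∧ ∀ i, v (ξ i) = γ i := by
  obtain ⟨g, hg, hg_inj⟩ := exists_continuous_injective_complex_of_two_le_finrank
    (E := EuclideanSpace ℝ (Fin d)) (by simpa using hd)
  obtain ⟨f, hf, hf_inj⟩ := exists_continuous_injective_of_interior_nonempty hXint
  let p := ((SwapPath.complex hn).map g hg hg_inj).map f hf hf_inj
  have : Module.Finite ℝ V := Module.finite_of_finrank_pos (by omega)
  let b := finBasisOfFinrankEq ℝ V hdim
  obtain ⟨t, ht⟩ := p.exists_det_collocationMatrix_eq_zero b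
  obtain ⟨v, hvV, hv0, hvξ⟩ := exists_mem_ne_zero_of_det_collocationMatrix_eq_zero b ht
  refine ⟨p.toFun t, p.injective t, 0, fun ⟨_, _, huniq⟩ => hv0 ?_⟩
  exact (huniq v ⟨hvV, hvξ⟩).trans (huniq 0 ⟨V.zero_mem, fun _ => rfl⟩).symm

/-- Mairhuber–Curtis: for `d ≥ 2` and a compact set `X ⊆ ℝ^d` with an
interior point, no subspace of `C(X)` of dimension `n ≥ 2` is a Chebyshev space: there
are distinct points `ξ¹, …, ξⁿ ∈ X` and values `γ ∈ ℝⁿ` for which interpolation from `V`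
fails to have a unique solution. -/
theorem mairhuber_curtis
    (d : ℕ) (hd : 2 ≤ d)
    (X : Set (EuclideanSpace ℝ (Fin d)))
    (hXcompact : IsCompact X) (hXint : (interior X).Nonempty)
    (n : ℕ) (hn : 2 ≤ n)
    (V : Submodule ℝ C(X, ℝ)) (hdim : Module.finrank ℝ V = n) :
    ∃ ξ : Fin n → X, Function.Injective ξ ∧
      ∃ γ : Fin n → ℝ,
        ¬ ∃! v : C(X, ℝ), v ∈ V ∧ ∀ i, v (ξ i) = γ i :=
  mairhuber_curtis_general d hd X hXint n hn V hdim
end
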